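/- arXiv:0711.0444 — 4 statements merged into one kernel-verified Lean document; each statement's English description precedes it below -/
import Mathlib

section
/- Let N ≥ 1 and let A and B be N×N matrices over a commutative ring R in which N·1 is invertible (e.g. R = ℝ). Then det(1_N + A·B) equals the sum, over all N^N functions k : {1,…,N} → {1,…,N}, of det(M_k), where M_k is the N×N matrix with entries (M_k)_{mn} = (1/N)·δ_{mn} + A_{k(m),m} · B_{m,k(n)} (no summation over m in this entry). -/
/-!
Write `M_k = N⁻¹ • 1 + X_k` with `X_k i j = A (k i) i * B i (k j)` and expand `det M_k` into
principal minors: `det M_k = ∑ s, N⁻¹ ^ |sᶜ| * det (X_k on s)`. The minor on `s` only sees `k`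
restricted to `s`, so summing over `k` the free values on `sᶜ` contribute `N ^ |sᶜ|`, which
cancels the prefactor, while summing over `k|s` reassembles, by multilinearity in the columns,
`det ((B * A) on s)`. The principal minors of `B * A` add up to `det (1 + B * A) = det (1 + A * B)`.
-/

open Matrix Finset

theorem Matrix.det_smul_one_add_eq_sum_det_submatrix {n R : Type*} [Fintype n] [DecidableEq n]
    [CommRing R] (x : R) (M : Matrix n n R) :
    (x • (1 : Matrix n n R) + M).det =
      ∑ s : Finset n, x ^ sᶜ.card * (M.submatrix ((↑) : s → n) (↑)).det := by
  rw [add_comm, det,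
    show M + x • (1 : Matrix n n R) = M.row + (x • (1 : Matrix n n R)).row from rfl,
    AlternatingMap.map_add_univ]
  refine sum_congr rfl fun s _ => ?_
  have hrows : s.piecewise M.row (x • (1 : Matrix n n R)).row =
      of fun i j => (if i ∈ s then 1 else x) * s.piecewise M.row (1 : Matrix n n R).row i j := by
    ext i j
    by_cases hi : i ∈ s <;> simp [hi, Finset.piecewise, row]
  rw [hrows, ← det_piecewise_one_eq_submatrix_det]
  refine (det_mul_column _ _).trans (congrArg (· * _) ?_)
  simp [prod_ite, filter_not, compl_eq_univ_sdiff]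

-- Cauchy–Binet with `k` running over all maps; the non-injective ones contribute zero.
theorem Matrix.det_mul_eq_sum_det {m n R : Type*} [Fintype m] [DecidableEq m] [Fintype n]
    [CommRing R] (B : Matrix m n R) (A : Matrix n m R) :
    (B * A).det = ∑ k : m → n, (of fun i j => A (k i) i * B i (k j)).det := by
  have hcols : (B * A)ᵀ = fun j => ∑ i, A i j • Bᵀ i := by
    ext j l
    simp [mul_apply, mul_comm]
  rw [← det_transpose, hcols]
  change (detRowAlternating : (m → R) [⋀^m]→ₗ[R] R).toMultilinearMap _ = _
  rw [MultilinearMap.map_sum]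
  refine sum_congr rfl fun k _ => ?_
  have hminor : detRowAlternating (fun i => Bᵀ (k i)) = (B.submatrix id k).det := det_transpose _
  rw [AlternatingMap.coe_multilinearMap, AlternatingMap.map_smul_univ, smul_eq_mul, hminor]
  exact (det_mul_column _ _).symm

theorem Fintype.sum_comp_restrict {ι α M : Type*} [Fintype ι] [DecidableEq ι] [Fintype α]
    [AddCommMonoid M] (s : Finset ι) (f : (s → α) → M) :
    ∑ k : ι → α, f (fun i => k i) = Fintype.card α ^ sᶜ.card • ∑ k : s → α, f k := by
  rw [← (Equiv.piEquivPiSubtypeProd (· ∈ s) fun _ => α).symm.sum_comp, Fintype.sum_prod_type_right]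
  simp [Fintype.card_subtype_compl, card_compl]

theorem Matrix.sum_det_submatrix_eq_card_pow_smul_det_submatrix_mul {m n R : Type*} [Fintype m]
    [DecidableEq m] [Fintype n] [CommRing R] (B : Matrix m n R) (A : Matrix n m R) (s : Finset m) :
    ∑ k : m → n, ((of fun i j => A (k i) i * B i (k j)).submatrix ((↑) : s → m) (↑)).det =
      Fintype.card n ^ sᶜ.card • ((B * A).submatrix ((↑) : s → m) (↑)).det := by
  rw [submatrix_mul _ _ _ id _ Function.bijective_id, det_mul_eq_sum_det]
  exact Fintype.sum_comp_restrict s fun k : s → n => (of fun i j => A (k i) i * B i (k j)).det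

theorem full_determinant_expansion_general
    (N : ℕ) (R : Type*) [CommRing R] [Invertible (N : R)]
    (A B : Matrix (Fin N) (Fin N) R) :
    (1 + A * B).det =
      ∑ k : Fin N → Fin N,
        (Matrix.of fun m n : Fin N =>
          (if m = n then ⅟(N : R) else 0) + A (k m) m * B m (k n)).det := by
  set X : (Fin N → Fin N) → Matrix (Fin N) (Fin N) R :=
    fun k => of fun m n => A (k m) m * B m (k n)
  have hsplit : ∀ k : Fin N → Fin N, (of fun m n : Fin N =>
      (if m = n then ⅟(N : R) else 0) + A (k m) m * B m (k n)) = ⅟(N : R) • 1 + X k := by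
    intro k; ext m n; simp [X, one_apply]
  calc (1 + A * B).det = (1 + B * A).det := det_one_add_mul_comm A B
    _ = ∑ s : Finset (Fin N), ((B * A).submatrix ((↑) : s → Fin N) (↑)).det := by
      simpa using det_smul_one_add_eq_sum_det_submatrix (1 : R) (B * A)
    _ = ∑ s : Finset (Fin N), ∑ k,
          ⅟(N : R) ^ sᶜ.card * ((X k).submatrix ((↑) : s → Fin N) (↑)).det := by
      refine sum_congr rfl fun s _ => ?_
      rw [← mul_sum, sum_det_submatrix_eq_card_pow_smul_det_submatrix_mul, Fintype.card_fin,
        nsmul_eq_mul, Nat.cast_pow, ← mul_assoc, ← mul_pow, invOf_mul_self, one_pow, one_mul]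
    _ = ∑ k, (⅟(N : R) • 1 + X k).det := by
      rw [sum_comm]
      simp_rw [det_smul_one_add_eq_sum_det_submatrix]
    _ = _ := sum_congr rfl fun k _ => congrArg det (hsplit k).symm

/-- **Full Determinant Expansion.** For `N × N` matrices `A`, `B` over a commutative ring
in which `N` is invertible, `det (1 + A * B)` equals the sum over all functions
`k : Fin N → Fin N` of the determinant of the matrix with entries
`(1/N) δ_{mn} + A (k m) m * B m (k n)`. -/
theorem full_determinant_expansion
    (N : ℕ) (hN : 1 ≤ N) (R : Type*) [CommRing R] [Invertible (N : R)]
    (A B : Matrix (Fin N) (Fin N) R) :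
    (1 + A * B).det =
      ∑ k : Fin N → Fin N,
        (Matrix.of fun m n : Fin N =>
          (if m = n then ⅟(N : R) else 0) + A (k m) m * B m (k n)).det :=
  full_determinant_expansion_general N R A B
end

section
/- Let N ≥ 1, let R be a commutative ring in which N·1 is invertible, and let a_1,…,a_N and b_1,…,b_N be vectors in R^N. Then det(1_N + Σ_{λ=1}^{N} a_λ⊗b_λ) equals the sum, over all functions k : {1,…,N} → {1,…,N}, of det of the N×N matrix with entries (1/N)·δ_{mn} + (a_m)_{k(m)} · (b_m)_{k(n)}. -/
open Matrix

section FDEHelpers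
variable {α β : Type*} [Fintype α] [DecidableEq β]

/-- Range indicator of a function, as a `Bool`-valued function. -/
def fdeSupp (κ : α → β) : β → Bool := fun j => decide (∃ m, κ m = j)

lemma fdeSupp_apply (κ : α → β) (m : α) : fdeSupp κ (κ m) = true :=
  decide_eq_true ⟨m, rfl⟩

/-- A choice of preimage for points in the range. -/
noncomputable def fdeInv (κ : α → β) (j : {j // fdeSupp κ j = true}) : α :=
  (of_decide_eq_true j.2).choose

lemma fdeInv_spec (κ : α → β) (j : {j // fdeSupp κ j = true}) : κ (fdeInv κ j) = ↑j :=
  (of_decide_eq_true j.2).choose_spec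

lemma fdeInv_app (κ : α → β) (hκ : Function.Injective κ) (m : α) (h) :
    fdeInv κ ⟨κ m, h⟩ = m := hκ (fdeInv_spec κ ⟨κ m, h⟩)

lemma fdeInv_inj (κ : α → β) : Function.Injective (fdeInv κ) := by
  intro j1 j2 h
  apply Subtype.ext
  rw [← fdeInv_spec κ j1, ← fdeInv_spec κ j2, h]

end FDEHelpers

section FDEBlock
variable {R : Type*} [CommRing R] {n : Type*} [Fintype n] [DecidableEq n]

/-- If all rows outside `s` are the corresponding identity rows, the determinant equals the
determinant of the principal block on `s`. -/
lemma fde_block (s : n → Bool) (M : Matrix n n R)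
    (h : ∀ m, s m = false → ∀ j, M m j = if m = j then 1 else 0) :
    M.det = (Matrix.of fun i j : {m // s m = true} => M ↑i ↑j).det := by
  rw [Matrix.twoBlockTriangular_det M (fun m => s m = true)
    (fun i hi j hj => by
      rw [h i (by simpa using hi) j, if_neg]
      rintro rfl; exact hi hj)]
  have h1 : (Matrix.toSquareBlockProp M fun i => ¬ s i = true) = 1 := by
    ext i j
    have hi : s (↑i : n) = false := by simpa using i.2
    have hd : M.toSquareBlockProp (fun i => ¬ s i = true) i j = M ↑i ↑j := rfl
    rw [hd, h _ hi]
    by_cases hij : i = j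
    · subst hij; simp
    · rw [if_neg (fun hv => hij (Subtype.ext hv)), Matrix.one_apply_ne hij]
  rw [h1, Matrix.det_one, mul_one]
  rfl

end FDEBlock

section FDEMain
variable {N : ℕ}

/-- The partial function encoded by `r`, restricted to its domain. -/
def fdeKap (i0 : Fin N) (r : Fin N → Option (Fin N)) :
    {m // (r m).isSome = true} → Fin N := fun m => (r ↑m).getD i0

noncomputable def fdePhi (i0 : Fin N) (r : Fin N → Option (Fin N)) :
    Σ s : Fin N → Bool, ({m // s m = true} → Fin N) :=
  ⟨fdeSupp (fdeKap i0 r), fun j => ↑(fdeInv (fdeKap i0 r) j)⟩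

noncomputable def fdePsi (s : Fin N → Bool) (k : {m // s m = true} → Fin N) :
    Fin N → Option (Fin N) :=
  fun m => if h : fdeSupp k m = true then some ↑(fdeInv k ⟨m, h⟩) else none

lemma fdePsi_isSome (s : Fin N → Bool) (k : {m // s m = true} → Fin N) (m : Fin N) :
    ((fdePsi s k) m).isSome = fdeSupp k m := by
  by_cases h : fdeSupp k m = true
  · rw [fdePsi, dif_pos h, h]; rfl
  · rw [fdePsi, dif_neg h]
    simp only [Option.isSome_none]
    exact (Bool.not_eq_true _ ▸ h : fdeSupp k m = false).symm

lemma fdePsi_pos (s : Fin N → Bool) (k : {m // s m = true} → Fin N) (m : Fin N)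
    (h : fdeSupp k m = true) : fdePsi s k m = some ↑(fdeInv k ⟨m, h⟩) := dif_pos h

lemma fdeKap_psi (i0 : Fin N) (s : Fin N → Bool) (k : {m // s m = true} → Fin N)
    (m' : {m // ((fdePsi s k) m).isSome = true}) (h : fdeSupp k ↑m' = true) :
    fdeKap i0 (fdePsi s k) m' = ↑(fdeInv k ⟨↑m', h⟩) := by
  rw [fdeKap]
  simp only [fdePsi_pos s k ↑m' h, Option.getD_some]

lemma fde_sigma_ext {s1 s2 : Fin N → Bool}
    {k1 : {m // s1 m = true} → Fin N} {k2 : {m // s2 m = true} → Fin N}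
    (h : s1 = s2)
    (hk : ∀ m (h1 : s1 m = true) (h2 : s2 m = true), k1 ⟨m, h1⟩ = k2 ⟨m, h2⟩) :
    (⟨s1, k1⟩ : Σ s : Fin N → Bool, ({m // s m = true} → Fin N)) = ⟨s2, k2⟩ := by
  subst h
  have : k1 = k2 := funext fun m => hk ↑m m.2 m.2
  rw [this]

variable {R : Type*} [CommRing R]

/-- Multilinear expansion of the left-hand side over `Option`-valued functions. -/
lemma fde_L1 (a b : Fin N → Fin N → R) :
    (1 + ∑ lam : Fin N, vecMulVec (a lam) (b lam)).det =
      ∑ r : Fin N → Option (Fin N),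
        (∏ m, (r m).elim 1 (fun lam => a lam m)) *
          (Matrix.of fun m n : Fin N =>
            ((r m).elim ((1 : Matrix (Fin N) (Fin N) R) m) b) n).det := by
  classical
  have hM : (1 + ∑ lam : Fin N, vecMulVec (a lam) (b lam)) =
      Matrix.of (fun m => ∑ o : Option (Fin N),
        (o.elim ((1 : Matrix (Fin N) (Fin N) R) m) (fun lam => a lam m • b lam))) := by
    ext m n
    simp [Fintype.sum_option, Matrix.sum_apply, vecMulVec_apply, Finset.sum_apply]
  rw [hM]
  have key := MultilinearMap.map_sum
    (Matrix.detRowAlternating (R := R) (n := Fin N)).toMultilinearMap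
    (g := fun (m : Fin N) (o : Option (Fin N)) =>
      o.elim ((1 : Matrix (Fin N) (Fin N) R) m) (fun lam => a lam m • b lam))
  have h0 : (Matrix.of (fun m => ∑ o : Option (Fin N),
        (o.elim ((1 : Matrix (Fin N) (Fin N) R) m) (fun lam => a lam m • b lam)))).det
      = ∑ r : Fin N → Option (Fin N),
          Matrix.detRowAlternating.toMultilinearMap
            (fun m => (r m).elim ((1 : Matrix (Fin N) (Fin N) R) m)
              (fun lam => a lam m • b lam)) := key
  rw [h0]
  refine Finset.sum_congr rfl fun r _ => ?_
  have hrow : (fun m => (r m).elim ((1 : Matrix (Fin N) (Fin N) R) m)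
      (fun lam => a lam m • b lam))
      = fun m => ((r m).elim (1 : R) (fun lam => a lam m)) •
          ((r m).elim ((1 : Matrix (Fin N) (Fin N) R) m) b) := by
    funext m; cases hm : r m <;> simp
  rw [hrow, MultilinearMap.map_smul_univ, smul_eq_mul]
  rfl

/-- Reduction of each term of the expanded left-hand side to a principal block. -/
lemma fde_L2 (a b : Fin N → Fin N → R) (i0 : Fin N) (r : Fin N → Option (Fin N)) :
    (∏ m, (r m).elim 1 (fun lam => a lam m)) *
      (Matrix.of fun m n : Fin N =>
        ((r m).elim ((1 : Matrix (Fin N) (Fin N) R) m) b) n).det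
    = (∏ m : {m // (r m).isSome = true}, a (fdeKap i0 r m) ↑m) *
        (Matrix.of fun m n : {m // (r m).isSome = true} =>
          b (fdeKap i0 r m) ↑n).det := by
  classical
  simp only [fdeKap]
  congr 1
  · rw [← Fintype.prod_subtype_mul_prod_subtype (fun m => (r m).isSome = true)
      (fun m => (r m).elim 1 (fun lam => a lam m))]
    have h2 : (∏ m : {x // ¬ (r x).isSome = true},
        (r ↑m).elim (1:R) (fun lam => a lam ↑m)) = 1 := by
      apply Finset.prod_eq_one
      intro m _
      have : r ↑m = none := by
        rcases hm : r (↑m : Fin N) with _ | lam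
        · rfl
        · exact absurd (by rw [hm]; rfl) m.2
      rw [this]; rfl
    rw [h2, mul_one]
    apply Finset.prod_congr rfl
    intro m _
    rcases Option.isSome_iff_exists.mp m.2 with ⟨lam, hlam⟩
    rw [hlam]
    rfl
  · rw [fde_block (fun m => (r m).isSome)
      (Matrix.of fun m n : Fin N =>
        ((r m).elim ((1 : Matrix (Fin N) (Fin N) R) m) b) n)
      (fun m hm j => by
        have : r m = none := Option.not_isSome_iff_eq_none.mp (by simp [hm])
        simp [this, Matrix.one_apply])]
    congr 1
    ext m n
    rcases Option.isSome_iff_exists.mp m.2 with ⟨lam, hlam⟩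
    simp [hlam]

/-- Multilinear expansion of each right-hand-side determinant over subsets (with block
reduction). -/
lemma fde_R1 [Invertible (N:R)] (a b : Fin N → Fin N → R) (k : Fin N → Fin N) :
    (Matrix.of fun m n : Fin N =>
        (if m = n then ⅟(N:R) else 0) + a m (k m) * b m (k n)).det
    = ∑ s : Fin N → Bool,
        (∏ m, cond (s m) (a m (k m)) (⅟(N:R))) *
          (Matrix.of fun m n : {m // s m = true} => b ↑m (k ↑n)).det := by
  classical
  have hM : (Matrix.of fun m n : Fin N =>
        (if m = n then ⅟(N:R) else 0) + a m (k m) * b m (k n))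
      = Matrix.of (fun m => ∑ t : Bool,
          cond t (a m (k m) • fun n => b m (k n))
            ((⅟(N:R)) • (1 : Matrix (Fin N) (Fin N) R) m)) := by
    ext m n
    simp only [Matrix.of_apply, Fintype.sum_bool, Pi.add_apply, Pi.smul_apply, cond_true,
      cond_false, smul_eq_mul, Matrix.one_apply, mul_ite, mul_one, mul_zero]
    ring
  rw [hM]
  have key := MultilinearMap.map_sum
    (Matrix.detRowAlternating (R := R) (n := Fin N)).toMultilinearMap
    (g := fun (m : Fin N) (t : Bool) =>
      cond t (a m (k m) • fun n => b m (k n))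
        ((⅟(N:R)) • (1 : Matrix (Fin N) (Fin N) R) m))
  have h0 : (Matrix.of (fun m => ∑ t : Bool,
      cond t (a m (k m) • fun n => b m (k n))
        ((⅟(N:R)) • (1 : Matrix (Fin N) (Fin N) R) m))).det
      = ∑ s : Fin N → Bool,
          Matrix.detRowAlternating.toMultilinearMap
            (fun m => cond (s m) (a m (k m) • fun n => b m (k n))
              ((⅟(N:R)) • (1 : Matrix (Fin N) (Fin N) R) m)) := key
  rw [h0]
  refine Finset.sum_congr rfl fun s _ => ?_
  have hrow : (fun m => cond (s m) (a m (k m) • fun n => b m (k n))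
      ((⅟(N:R)) • (1 : Matrix (Fin N) (Fin N) R) m))
      = fun m => (cond (s m) (a m (k m)) (⅟(N:R))) •
          (cond (s m) (fun n => b m (k n)) ((1 : Matrix (Fin N) (Fin N) R) m)) := by
    funext m; cases s m <;> rfl
  rw [hrow, MultilinearMap.map_smul_univ, smul_eq_mul]
  congr 1
  have hdet : Matrix.detRowAlternating.toMultilinearMap
      (fun m => (cond (s m) (fun n => b m (k n)) ((1 : Matrix (Fin N) (Fin N) R) m)))
      = (Matrix.of fun m n : Fin N =>
          (cond (s m) (fun n => b m (k n)) ((1 : Matrix (Fin N) (Fin N) R) m)) n).det := rfl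
  rw [hdet, fde_block s _ (fun m hm j => by simp [hm, Matrix.one_apply])]
  congr 1
  ext m n
  simp [m.2]

/-- Summing over all of `k` on the complement of `s` cancels the `⅟N` factors. -/
lemma fde_R3 [Invertible (N:R)] (a b : Fin N → Fin N → R) (s : Fin N → Bool) :
    ∑ k : Fin N → Fin N,
      (∏ m, cond (s m) (a m (k m)) (⅟(N:R))) *
        (Matrix.of fun m n : {m // s m = true} => b ↑m (k ↑n)).det
    = ∑ κ : {m // s m = true} → Fin N,
        (∏ m : {m // s m = true}, a ↑m (κ m)) *
          (Matrix.of fun m n : {m // s m = true} => b ↑m (κ n)).det := by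
  classical
  set c := Fintype.card {x // ¬ s x = true} with hc
  set H : ({m // s m = true} → Fin N) → R := fun κ =>
    (∏ m : {m // s m = true}, a ↑m (κ m)) *
      (Matrix.of fun m n : {m // s m = true} => b ↑m (κ n)).det with hH
  have step1 : ∀ k : Fin N → Fin N,
      (∏ m, cond (s m) (a m (k m)) (⅟(N:R))) *
        (Matrix.of fun m n : {m // s m = true} => b ↑m (k ↑n)).det
      = (⅟(N:R))^c * H (fun m => k ↑m) := by
    intro k
    have hsplit : (∏ m, cond (s m) (a m (k m)) (⅟(N:R)))
        = (∏ m : {m // s m = true}, a ↑m (k ↑m)) * (⅟(N:R))^c := by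
      rw [← Fintype.prod_subtype_mul_prod_subtype (fun m => s m = true)
        (fun m => cond (s m) (a m (k m)) (⅟(N:R)))]
      congr 1
      · refine Finset.prod_congr rfl fun m _ => ?_
        have hm : s ↑m = true := m.2
        rw [hm, cond_true]
      · have hone : ∀ m : {x // ¬ s x = true},
            (bif s ↑m then a ↑m (k ↑m) else ⅟(N:R)) = ⅟(N:R) := by
          intro m
          have hm : s ↑m = false := by simpa using m.2
          rw [hm, cond_false]
        rw [Finset.prod_congr rfl fun m _ => hone m, Finset.prod_const, Finset.card_univ]
    rw [hsplit, hH]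
    ring
  rw [Finset.sum_congr rfl fun k _ => step1 k, ← Finset.mul_sum]
  let e : (Fin N → Fin N) ≃ ({m // s m = true} → Fin N) × ({m // ¬ s m = true} → Fin N) :=
    ((Equiv.sumCompl (fun m => s m = true)).symm.arrowCongr
      (Equiv.refl (Fin N))).trans (Equiv.sumArrowEquivProdArrow _ _ _)
  have he : ∀ k : Fin N → Fin N,
      (e k).1 = (fun m : {m // s m = true} => k ↑m) := by
    intro k; funext m; rfl
  have step2 : ∑ k : Fin N → Fin N, H (fun m => k ↑m)
      = ∑ p : ({m // s m = true} → Fin N) × ({m // ¬ s m = true} → Fin N), H p.1 := by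
    exact Fintype.sum_equiv e _ _ fun k => congrArg H (he k).symm
  rw [step2, Fintype.sum_prod_type]
  have step3 : ∀ κ, (∑ _κ' : {m // ¬ s m = true} → Fin N, H κ) = (N^c : ℕ) • H κ := by
    intro κ
    rw [Finset.sum_const, Finset.card_univ, Fintype.card_fun, Fintype.card_fin]
  rw [Finset.sum_congr rfl fun κ _ => step3 κ, ← Finset.smul_sum, nsmul_eq_mul,
    Nat.cast_pow, ← mul_assoc, ← mul_pow, invOf_mul_self, one_pow, one_mul]
set_option maxHeartbeats 1000000 in
lemma fde_key {R : Type*} [CommRing R] (i0 : Fin N) (a b : Fin N → Fin N → R) :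
    (∑ r : Fin N → Option (Fin N),
      (∏ m : {m // (r m).isSome = true}, a (fdeKap i0 r m) ↑m) *
        (Matrix.of fun m n : {m // (r m).isSome = true} => b (fdeKap i0 r m) ↑n).det)
    = ∑ x : Σ s : Fin N → Bool, ({m // s m = true} → Fin N),
        (∏ m : {m // x.1 m = true}, a ↑m (x.2 m)) *
          (Matrix.of fun m n : {m // x.1 m = true} => b ↑m (x.2 n)).det := by
  classical
  have hvanL : ∀ r : Fin N → Option (Fin N), ¬ Function.Injective (fdeKap i0 r) →
      (∏ m : {m // (r m).isSome = true}, a (fdeKap i0 r m) ↑m) *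
        (Matrix.of fun m n : {m // (r m).isSome = true} => b (fdeKap i0 r m) ↑n).det = 0 := by
    intro r hni
    rw [Function.not_injective_iff] at hni
    obtain ⟨m1, m2, heq, hne⟩ := hni
    rw [Matrix.det_zero_of_row_eq hne (funext fun n => by
      show b (fdeKap i0 r m1) ↑n = b (fdeKap i0 r m2) ↑n
      rw [heq]), mul_zero]
  have hvanR : ∀ x : Σ s : Fin N → Bool, ({m // s m = true} → Fin N),
      ¬ Function.Injective x.2 →
      (∏ m : {m // x.1 m = true}, a ↑m (x.2 m)) *
        (Matrix.of fun m n : {m // x.1 m = true} => b ↑m (x.2 n)).det = 0 := by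
    intro x hni
    rw [Function.not_injective_iff] at hni
    obtain ⟨n1, n2, heq, hne⟩ := hni
    rw [Matrix.det_zero_of_column_eq hne (fun m => by
      show b ↑m (x.2 n1) = b ↑m (x.2 n2)
      rw [heq]), mul_zero]
  rw [← Finset.sum_filter_of_ne
      (p := fun r : Fin N → Option (Fin N) => Function.Injective (fdeKap i0 r))
      (fun r _ h => by by_contra hn; exact h (hvanL r hn)),
    ← Finset.sum_filter_of_ne
      (p := fun x : Σ s : Fin N → Bool, ({m // s m = true} → Fin N) =>
        Function.Injective x.2)
      (fun x _ h => by by_contra hn; exact h (hvanR x hn))]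
  refine Finset.sum_bij' (fun r _ => fdePhi i0 r) (fun x _ => fdePsi x.1 x.2)
    ?_ ?_ ?_ ?_ ?_
  · -- hi : image in injective filter
    intro r _
    refine Finset.mem_filter.mpr ⟨Finset.mem_univ _, ?_⟩
    exact Subtype.coe_injective.comp (fdeInv_inj _)
  · -- hj : preimage in injective filter
    rintro ⟨s, k⟩ _
    refine Finset.mem_filter.mpr ⟨Finset.mem_univ _, ?_⟩
    rintro ⟨m1, hs1⟩ ⟨m2, hs2⟩ heq
    have h1 : fdeSupp k m1 = true := by rw [← fdePsi_isSome s k]; exact hs1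
    have h2 : fdeSupp k m2 = true := by rw [← fdePsi_isSome s k]; exact hs2
    rw [fdeKap_psi i0 s k ⟨m1, hs1⟩ h1, fdeKap_psi i0 s k ⟨m2, hs2⟩ h2] at heq
    have h3 := fdeInv_inj k (Subtype.coe_injective heq)
    have h4 : m1 = m2 := congrArg Subtype.val h3
    exact Subtype.ext h4
  · -- left inverse
    intro r hr
    have hinj : Function.Injective (fdeKap i0 r) := (Finset.mem_filter.mp hr).2
    show fdePsi (fdeSupp (fdeKap i0 r)) (fun j => (↑(fdeInv (fdeKap i0 r) j) : Fin N)) = r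
    funext m
    rcases hrm : r m with _ | lam
    · have hm : ¬ ((r m).isSome = true) := by rw [hrm]; simp
      have hns : ¬ (fdeSupp (fun j => (↑(fdeInv (fdeKap i0 r) j) : Fin N)) m = true) := by
        intro hsupp
        obtain ⟨j, hj⟩ := of_decide_eq_true hsupp
        have hj' : (↑(fdeInv (fdeKap i0 r) j) : Fin N) = m := hj
        have h5 := (fdeInv (fdeKap i0 r) j).2
        rw [hj'] at h5
        exact hm h5
      rw [fdePsi, dif_neg hns]
    · have h1 : (r m).isSome = true := by rw [hrm]; rfl
      have hsupp : fdeSupp (fun j => (↑(fdeInv (fdeKap i0 r) j) : Fin N)) m = true := by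
        have hex : ∃ j : {j // fdeSupp (fdeKap i0 r) j = true},
            (↑(fdeInv (fdeKap i0 r) j) : Fin N) = m := by
          refine ⟨⟨fdeKap i0 r ⟨m, h1⟩, fdeSupp_apply (fdeKap i0 r) ⟨m, h1⟩⟩, ?_⟩
          rw [fdeInv_app _ hinj ⟨m, h1⟩]
        exact decide_eq_true hex
      rw [fdePsi, dif_pos hsupp]
      congr 1
      have hspec := fdeInv_spec (fun j => (↑(fdeInv (fdeKap i0 r) j) : Fin N)) ⟨m, hsupp⟩
      have h6 : fdeInv (fdeKap i0 r)
          (fdeInv (fun j => (↑(fdeInv (fdeKap i0 r) j) : Fin N)) ⟨m, hsupp⟩) = ⟨m, h1⟩ :=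
        Subtype.ext hspec
      have h7 := fdeInv_spec (fdeKap i0 r)
        (fdeInv (fun j => (↑(fdeInv (fdeKap i0 r) j) : Fin N)) ⟨m, hsupp⟩)
      rw [h6] at h7
      have h8 : fdeKap i0 r ⟨m, h1⟩ = lam := by
        rw [fdeKap]; simp only [hrm, Option.getD_some]
      rw [← h7, h8]
  · -- right inverse
    rintro ⟨s, k⟩ hx
    have hk : Function.Injective k := (Finset.mem_filter.mp hx).2
    show fdePhi i0 (fdePsi s k) = ⟨s, k⟩
    apply fde_sigma_ext
    · funext m
      by_cases hsm : s m = true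
      · rw [hsm]
        have hsp : fdeSupp k (k ⟨m, hsm⟩) = true := fdeSupp_apply k ⟨m, hsm⟩
        have hsome : ((fdePsi s k) (k ⟨m, hsm⟩)).isSome = true := by
          rw [fdePsi_isSome]; exact hsp
        have hex : ∃ m' : {m' // ((fdePsi s k) m').isSome = true},
            fdeKap i0 (fdePsi s k) m' = m := by
          refine ⟨⟨k ⟨m, hsm⟩, hsome⟩, ?_⟩
          rw [fdeKap_psi i0 s k ⟨k ⟨m, hsm⟩, hsome⟩ hsp, fdeInv_app k hk ⟨m, hsm⟩]
        exact decide_eq_true hex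
      · have hsm' : s m = false := by simpa using hsm
        rw [hsm']
        apply decide_eq_false
        rintro ⟨⟨m', hsome'⟩, hm'⟩
        have hsp' : fdeSupp k m' = true := by rw [← fdePsi_isSome s k]; exact hsome'
        rw [fdeKap_psi i0 s k ⟨m', hsome'⟩ hsp'] at hm'
        have h5 := (fdeInv k ⟨m', hsp'⟩).2
        rw [hm'] at h5
        exact hsm h5
    · intro m h1 h2
      have hq1 := fdeInv_spec (fdeKap i0 (fdePsi s k)) ⟨m, h1⟩
      have hq : fdeSupp k ↑(fdeInv (fdeKap i0 (fdePsi s k)) ⟨m, h1⟩) = true := by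
        rw [← fdePsi_isSome s k]
        exact (fdeInv (fdeKap i0 (fdePsi s k)) ⟨m, h1⟩).2
      have hq2 := fdeKap_psi i0 s k (fdeInv (fdeKap i0 (fdePsi s k)) ⟨m, h1⟩) hq
      rw [hq2] at hq1
      have hw2 := fdeInv_spec k ⟨↑(fdeInv (fdeKap i0 (fdePsi s k)) ⟨m, h1⟩), hq⟩
      have hw3 : fdeInv k ⟨↑(fdeInv (fdeKap i0 (fdePsi s k)) ⟨m, h1⟩), hq⟩ = ⟨m, h2⟩ :=
        Subtype.ext hq1
      show (↑(fdeInv (fdeKap i0 (fdePsi s k)) ⟨m, h1⟩) : Fin N) = k ⟨m, h2⟩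
      rw [← hw3, hw2]
  · -- terms agree
    intro r hr
    have hinj : Function.Injective (fdeKap i0 r) := (Finset.mem_filter.mp hr).2
    let e : {m // (r m).isSome = true} ≃ {j // fdeSupp (fdeKap i0 r) j = true} :=
      { toFun := fun m => ⟨fdeKap i0 r m, fdeSupp_apply _ m⟩
        invFun := fdeInv (fdeKap i0 r)
        left_inv := fun m => fdeInv_app _ hinj m _
        right_inv := fun j => Subtype.ext (fdeInv_spec _ j) }
    show (∏ m : {m // (r m).isSome = true}, a (fdeKap i0 r m) ↑m) *
        (Matrix.of fun m n : {m // (r m).isSome = true} => b (fdeKap i0 r m) ↑n).det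
      = (∏ j : {j // fdeSupp (fdeKap i0 r) j = true}, a ↑j ↑(fdeInv (fdeKap i0 r) j)) *
          (Matrix.of fun j l : {j // fdeSupp (fdeKap i0 r) j = true} =>
            b ↑j ↑(fdeInv (fdeKap i0 r) l)).det
    congr 1
    · refine Fintype.prod_equiv e _ _ fun m => ?_
      show a (fdeKap i0 r m) ↑m = a ↑(e m) ↑(fdeInv (fdeKap i0 r) (e m))
      rw [show fdeInv (fdeKap i0 r) (e m) = m from fdeInv_app _ hinj m _]
      rfl
    · rw [← Matrix.det_submatrix_equiv_self e]
      congr 1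
      ext m n
      show b (fdeKap i0 r m) ↑n = b ↑(e m) ↑(fdeInv (fdeKap i0 r) (e n))
      rw [show fdeInv (fdeKap i0 r) (e n) = n from fdeInv_app _ hinj n _]
      rfl

end FDEMain

/-- **Full Determinant Expansion, vector formulation.** For vectors
`a₁, …, a_N` and `b₁, …, b_N` in `R^N`, with `N` invertible in `R`,
`det (1 + Σ_λ a_λ ⊗ b_λ)` equals the sum over all functions `k : Fin N → Fin N` of the
determinant of the matrix with entries `(1/N) δ_{mn} + (a_m)_{k m} * (b_m)_{k n}`. -/
theorem full_determinant_expansion_vectors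
    (N : ℕ) (hN : 1 ≤ N) (R : Type*) [CommRing R] [Invertible (N : R)]
    (a b : Fin N → Fin N → R) :
    (1 + ∑ lam : Fin N, vecMulVec (a lam) (b lam)).det =
      ∑ k : Fin N → Fin N,
        (Matrix.of fun m n : Fin N =>
          (if m = n then ⅟(N : R) else 0) + a m (k m) * b m (k n)).det := by
  classical
  have i0 : Fin N := ⟨0, hN⟩
  calc (1 + ∑ lam : Fin N, vecMulVec (a lam) (b lam)).det
      = ∑ r : Fin N → Option (Fin N),
          (∏ m, (r m).elim 1 (fun lam => a lam m)) *
            (Matrix.of fun m n : Fin N =>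
              ((r m).elim ((1 : Matrix (Fin N) (Fin N) R) m) b) n).det := fde_L1 a b
    _ = ∑ r : Fin N → Option (Fin N),
          (∏ m : {m // (r m).isSome = true}, a (fdeKap i0 r m) ↑m) *
            (Matrix.of fun m n : {m // (r m).isSome = true} =>
              b (fdeKap i0 r m) ↑n).det :=
        Finset.sum_congr rfl fun r _ => fde_L2 a b i0 r
    _ = ∑ x : Σ s : Fin N → Bool, ({m // s m = true} → Fin N),
          (∏ m : {m // x.1 m = true}, a ↑m (x.2 m)) *
            (Matrix.of fun m n : {m // x.1 m = true} => b ↑m (x.2 n)).det :=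
        fde_key i0 a b
    _ = ∑ s : Fin N → Bool, ∑ κ : {m // s m = true} → Fin N,
          (∏ m : {m // s m = true}, a ↑m (κ m)) *
            (Matrix.of fun m n : {m // s m = true} => b ↑m (κ n)).det := by
        rw [← Finset.univ_sigma_univ, Finset.sum_sigma]
    _ = ∑ s : Fin N → Bool, ∑ k : Fin N → Fin N,
          (∏ m, cond (s m) (a m (k m)) (⅟(N:R))) *
            (Matrix.of fun m n : {m // s m = true} => b ↑m (k ↑n)).det :=
        Finset.sum_congr rfl fun s _ => (fde_R3 a b s).symm
    _ = ∑ k : Fin N → Fin N, ∑ s : Fin N → Bool,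
          (∏ m, cond (s m) (a m (k m)) (⅟(N:R))) *
            (Matrix.of fun m n : {m // s m = true} => b ↑m (k ↑n)).det :=
        Finset.sum_comm
    _ = ∑ k : Fin N → Fin N,
          (Matrix.of fun m n : Fin N =>
            (if m = n then ⅟(N : R) else 0) + a m (k m) * b m (k n)).det :=
        Finset.sum_congr rfl fun k _ => (fde_R1 a b k).symm
end

section
/- Let N, L ≥ 1, let R be a commutative ring in which N·1 is invertible, and let a_1,…,a_L and b_1,…,b_L be vectors in R^N. Then det(1_N + Σ_{λ=1}^{L} a_λ⊗b_λ) equals the sum, over all N^L functions k : {1,…,L} → {1,…,N}, of det of the L×L matrix with entries (1/N)·δ_{μν} + (a_μ)_{k(μ)} · (b_μ)_{k(ν)}, for μ, ν = 1,…,L. -/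
open Matrix Finset

private lemma key_sum (N L : ℕ) (R : Type*) [CommRing R] [Invertible (N : R)]
    (a b : Fin L → Fin N → R) (σ : Equiv.Perm (Fin L)) :
    ∑ k : Fin L → Fin N, ∏ ν : Fin L,
        ((if σ ν = ν then ⅟(N : R) else 0) + a (σ ν) (k (σ ν)) * b (σ ν) (k ν)) =
      ∏ ν : Fin L, ((if σ ν = ν then (1 : R) else 0) + ∑ j : Fin N, a ν j * b (σ ν) j) := by
  classical
  simp only [Finset.prod_add]
  rw [Finset.sum_comm]
  refine Finset.sum_congr rfl fun t ht => ?_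
  by_cases hfix : ∀ ν ∈ t, σ ν = ν
  · -- σ fixes all of t pointwise
    set S : Finset (Fin L) := univ \ t with hS
    have htS : univ \ S = t := Finset.sdiff_sdiff_eq_self (Finset.subset_univ t)
    have hfix' : ∀ ν, ν ∉ S → σ ν = ν := by
      intro ν hν
      have : ν ∈ t := by
        by_contra h
        exact hν (Finset.mem_sdiff.mpr ⟨Finset.mem_univ ν, h⟩)
      exact hfix ν this
    have hsupp : {x | σ x ≠ x} ⊆ (S : Set (Fin L)) := by
      intro x hx
      by_contra h
      exact hx (hfix' x (by simpa using h))
    -- the ψ function folding the ⅟N factors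
    set ψ : Fin L → Fin N → R :=
      fun ν j => if ν ∈ S then a ν j * b (σ ν) j else ⅟(N : R) with hψ
    have hstep : ∀ k : Fin L → Fin N,
        (∏ ν ∈ t, (if σ ν = ν then ⅟(N : R) else 0)) *
          ∏ ν ∈ S, (a (σ ν) (k (σ ν)) * b (σ ν) (k ν)) = ∏ ν, ψ ν (k ν) := by
      intro k
      have h1 : ∏ ν ∈ t, (if σ ν = ν then ⅟(N : R) else 0) = ∏ ν ∈ t, ψ ν (k ν) := by
        refine Finset.prod_congr rfl fun ν hν => ?_
        have hνS : ν ∉ S := by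
          rw [← htS] at hν
          exact (Finset.mem_sdiff.mp hν).2
        rw [if_pos (hfix ν hν), hψ]
        simp [hνS]
      have h2 : ∏ ν ∈ S, (a (σ ν) (k (σ ν)) * b (σ ν) (k ν)) = ∏ ν ∈ S, ψ ν (k ν) := by
        rw [Finset.prod_mul_distrib,
          Equiv.Perm.prod_comp σ S (fun ν => a ν (k ν)) hsupp, ← Finset.prod_mul_distrib]
        refine Finset.prod_congr rfl fun ν hν => ?_
        simp [hψ, hν]
      rw [h1, h2, ← htS, Finset.prod_sdiff (Finset.subset_univ S)]
    calc
      ∑ k : Fin L → Fin N,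
          (∏ ν ∈ t, (if σ ν = ν then ⅟(N : R) else 0)) *
            ∏ ν ∈ univ \ t, (a (σ ν) (k (σ ν)) * b (σ ν) (k ν))
          = ∑ k : Fin L → Fin N, ∏ ν, ψ ν (k ν) := by
            refine Finset.sum_congr rfl fun k _ => hstep k
      _ = ∏ ν, ∑ j : Fin N, ψ ν j := by
            rw [← Fintype.piFinset_univ, Finset.sum_prod_piFinset]
      _ = ∏ ν, (if ν ∈ S then ∑ j : Fin N, a ν j * b (σ ν) j else 1) := by
            refine Finset.prod_congr rfl fun ν _ => ?_
            by_cases hν : ν ∈ S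
            · simp [hψ, hν]
            · simp only [hψ, hν, if_false]
              rw [Finset.sum_const, Finset.card_univ, Fintype.card_fin, nsmul_eq_mul,
                mul_invOf_self]
      _ = (∏ ν ∈ t, (if σ ν = ν then (1 : R) else 0)) *
            ∏ ν ∈ S, ∑ j : Fin N, a ν j * b (σ ν) j := by
            rw [← Finset.prod_sdiff (Finset.subset_univ S), htS]
            congr 1
            · refine Finset.prod_congr rfl fun ν hν => ?_
              have hνS : ν ∉ S := by
                rw [← htS] at hν
                exact (Finset.mem_sdiff.mp hν).2
              rw [if_neg hνS, if_pos (hfix ν hν)]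
            · refine Finset.prod_congr rfl fun ν hν => by rw [if_pos hν]
  · -- σ moves some point of t : both sides vanish
    obtain ⟨ν, hνt, hνσ⟩ := not_forall₂.mp hfix
    have hz : ∀ (c : R), (∏ ν ∈ t, (if σ ν = ν then c else 0)) = 0 := fun c =>
      Finset.prod_eq_zero hνt (if_neg hνσ)
    rw [hz]
    simp [hz]

/-- **Full Determinant Expansion, fewer vectors.** For vectors
`a₁, …, a_L` and `b₁, …, b_L` in `R^N`, with `N` invertible in `R`,
`det (1_N + Σ_{λ=1}^L a_λ ⊗ b_λ)` equals the sum over all functions `k : Fin L → Fin N` of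
the determinant of the `L × L` matrix with entries
`(1/N) δ_{μν} + (a_μ)_{k μ} * (b_μ)_{k ν}`. -/
theorem full_determinant_expansion_fewer_vectors
    (N L : ℕ) (hN : 1 ≤ N) (hL : 1 ≤ L) (R : Type*) [CommRing R] [Invertible (N : R)]
    (a b : Fin L → Fin N → R) :
    (1 + ∑ lam : Fin L, vecMulVec (a lam) (b lam)).det =
      ∑ k : Fin L → Fin N,
        (Matrix.of fun μ ν : Fin L =>
          (if μ = ν then ⅟(N : R) else 0) + a μ (k μ) * b μ (k ν)).det := by
  classical
  have hLHS : (1 + ∑ lam : Fin L, vecMulVec (a lam) (b lam)) =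
      1 + (Matrix.of fun (i : Fin N) (lam : Fin L) => a lam i) *
        (Matrix.of fun (lam : Fin L) (j : Fin N) => b lam j) := by
    ext i j
    simp [Matrix.mul_apply, vecMulVec_apply, Matrix.sum_apply]
  rw [hLHS, Matrix.det_one_add_mul_comm]
  have hBA : (1 : Matrix (Fin L) (Fin L) R) +
      (Matrix.of fun (lam : Fin L) (j : Fin N) => b lam j) *
        (Matrix.of fun (i : Fin N) (lam : Fin L) => a lam i) =
      Matrix.of fun μ ν : Fin L =>
        (if μ = ν then (1 : R) else 0) + ∑ j : Fin N, a ν j * b μ j := by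
    ext μ ν
    simp [Matrix.mul_apply, Matrix.one_apply, mul_comm]
  rw [hBA]
  rw [Matrix.det_apply']
  simp only [Matrix.det_apply']
  rw [Finset.sum_comm]
  refine Finset.sum_congr rfl fun σ _ => ?_
  rw [← Finset.mul_sum]
  congr 1
  simpa using (key_sum N L R a b σ).symm
end

section
/- Let n and ℓ be nonnegative integers and set M̃² := 4·(n+ℓ+1)·(n+ℓ+2). Define the terminating hypergeometric polynomial F(x) := Σ_{j=0}^{n} [ (−(n+ℓ+1))_j · (−n)_j / ( (ℓ+2)_j · j! ) ] · x^j, where (a)_j := ∏_{i=0}^{j−1}(a+i) is the rising factorial, and define ζ : (0,∞) → ℝ by ζ(y) := y^ℓ · (y²+1)^{−(n+ℓ+1)} · F(−y²). Then for all y > 0, ζ''(y) + (3/y)·ζ'(y) + ( M̃²/(1+y²)² − ℓ(ℓ+2)/y² )·ζ(y) = 0. -/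
/-- The terminating Gauss hypergeometric polynomial
`₂F₁(−(n+ℓ+1), −n; ℓ+2; x) = Σ_{j=0}^n ((−(n+ℓ+1))_j (−n)_j / ((ℓ+2)_j j!)) x^j`,
where `(a)_j = ∏_{i<j} (a+i)` is the rising factorial. -/
noncomputable def hyperF (n l : ℕ) (x : ℝ) : ℝ :=
  ∑ j ∈ Finset.range (n + 1),
    ((∏ i ∈ Finset.range j, (-((n : ℝ) + (l : ℝ) + 1) + (i : ℝ))) *
        (∏ i ∈ Finset.range j, (-(n : ℝ) + (i : ℝ))) /
        ((∏ i ∈ Finset.range j, ((l : ℝ) + 2 + (i : ℝ))) * (Nat.factorial j : ℝ))) *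
      x ^ j

/-- The regular radial meson solution `ζ(y) = y^ℓ (y²+1)^{−(n+ℓ+1)} ₂F₁(…; −y²)`. -/
noncomputable def zetaSol (n l : ℕ) (y : ℝ) : ℝ :=
  y ^ l * ((y ^ 2 + 1) ^ (n + l + 1))⁻¹ * hyperF n l (-y ^ 2)

/-! Write `N = n + ℓ + 1`. Then `ζ = ∑ⱼ (-1)ʲ cⱼ y^(2j+ℓ) (1+y²)^(-N)`, where `cⱼ` are the
hypergeometric coefficients. For `M̃² = 4N(N+1)` the radial operator maps `y^a (1+y²)^b`
(with `b = -N`) to a combination of `y^(a-2) (1+y²)^(b-1)` and `y^a (1+y²)^(b-1)` only: this value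
of `M̃²` is exactly what cancels the `(1+y²)^(b-2)` terms. For `a = 2j + ℓ` the two coefficients
are `4j(j+ℓ+1)` and `4(j-N)(j-n)`, so the recursion `(j+1)(j+ℓ+2) cⱼ₊₁ = (j-N)(j-n) cⱼ` makes
the sum telescope, and it closes off at `j = n` because the factor `j - n` vanishes there. -/

open Finset Filter Topology

noncomputable def radialOp (M l : ℝ) (f : ℝ → ℝ) (y : ℝ) : ℝ :=
  deriv (deriv f) y + 3 / y * deriv f y + (M / (1 + y ^ 2) ^ 2 - l * (l + 2) / y ^ 2) * f y

theorem radialOp_sum {ι : Type*} (M l : ℝ) (s : Finset ι) (c : ι → ℝ) {f : ι → ℝ → ℝ} {y : ℝ}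
    (hf : ∀ i ∈ s, ∀ᶠ x in 𝓝 y, DifferentiableAt ℝ (f i) x)
    (hf' : ∀ i ∈ s, DifferentiableAt ℝ (deriv (f i)) y) :
    radialOp M l (fun x => ∑ i ∈ s, c i * f i x) y = ∑ i ∈ s, c i * radialOp M l (f i) y := by
  have hd : deriv (fun x => ∑ i ∈ s, c i * f i x) =ᶠ[𝓝 y]
      fun x => ∑ i ∈ s, c i * deriv (f i) x := by
    filter_upwards [(eventually_all_finset s).2 hf] with x hx
    rw [deriv_fun_sum fun i hi => (hx i hi).const_mul (c i)]
    simp only [deriv_const_mul_field']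
  have hdd : deriv (fun x => ∑ i ∈ s, c i * deriv (f i) x) y =
      ∑ i ∈ s, c i * deriv (deriv (f i)) y := by
    rw [deriv_fun_sum fun i hi => (hf' i hi).const_mul (c i)]
    simp only [deriv_const_mul_field']
  rw [radialOp, hd.deriv_eq, hdd, hd.eq_of_nhds]
  simp only [radialOp, mul_sum, ← sum_add_distrib]
  refine sum_congr rfl fun i _ => ?_
  ring

noncomputable def radialMonomial (a b : ℤ) (y : ℝ) : ℝ := y ^ a * (y ^ 2 + 1) ^ b

theorem hasDerivAt_radialMonomial (a b : ℤ) {y : ℝ} (hy : y ≠ 0) :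
    HasDerivAt (radialMonomial a b)
      (a * radialMonomial (a - 1) b y + 2 * b * radialMonomial (a + 1) (b - 1) y) y := by
  have hu : y ^ 2 + 1 ≠ 0 := by positivity
  have hpow : HasDerivAt (fun x : ℝ => x ^ 2 + 1) (2 * y) y := by
    simpa using (hasDerivAt_pow 2 y).add_const 1
  have h := (hasDerivAt_zpow a y (.inl hy)).fun_mul
    ((hasDerivAt_zpow b _ (.inl hu)).comp (h := fun x : ℝ => x ^ 2 + 1) y hpow)
  refine h.congr_deriv ?_
  simp only [radialMonomial, Function.comp_apply, zpow_add_one₀ hy]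
  ring

theorem deriv_radialMonomial_eventuallyEq (a b : ℤ) {y : ℝ} (hy : y ≠ 0) :
    deriv (radialMonomial a b) =ᶠ[𝓝 y]
      fun x => a * radialMonomial (a - 1) b x + 2 * b * radialMonomial (a + 1) (b - 1) x :=
  (eventually_ne_nhds hy).mono fun _ hx => (hasDerivAt_radialMonomial a b hx).deriv

theorem differentiableAt_deriv_radialMonomial (a b : ℤ) {y : ℝ} (hy : y ≠ 0) :
    DifferentiableAt ℝ (deriv (radialMonomial a b)) y :=
  ((((hasDerivAt_radialMonomial _ _ hy).const_mul _).add
    ((hasDerivAt_radialMonomial _ _ hy).const_mul _)).differentiableAt).congr_of_eventuallyEq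
    (deriv_radialMonomial_eventuallyEq a b hy)

theorem radialOp_radialMonomial (a b : ℤ) (l : ℝ) {y : ℝ} (hy : y ≠ 0) :
    radialOp (4 * b * (b - 1)) l (radialMonomial a b) y =
      (a - l) * (a + l + 2) * radialMonomial (a - 2) (b - 1) y +
        ((a - l) * (a + l + 2) + 4 * b * (a + b + 1)) * radialMonomial a (b - 1) y := by
  have hu : y ^ 2 + 1 ≠ 0 := by positivity
  have hd := deriv_radialMonomial_eventuallyEq a b hy
  have hdd := ((hasDerivAt_radialMonomial (a - 1) b hy).const_mul (a : ℝ)).fun_add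
    ((hasDerivAt_radialMonomial (a + 1) (b - 1) hy).const_mul (2 * b : ℝ))
  rw [radialOp, hd.deriv_eq, hdd.deriv, hd.eq_of_nhds]
  push_cast
  simp only [radialMonomial, zpow_sub₀ hy, zpow_add₀ hy, zpow_sub₀ hu, zpow_one, zpow_two]
  field_simp
  ring

theorem sum_range_mul_add_eq_zero_of_rec {R : Type*} [CommRing R] {A B d X : ℕ → R} (n : ℕ)
    (h0 : A 0 = 0) (hrec : ∀ j, A (j + 1) * d (j + 1) = -(B j * d j)) (hn : B n = 0) :
    ∑ j ∈ range (n + 1), d j * (A j * X j + B j * X (j + 1)) = 0 := by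
  have htel : ∀ j, d j * (A j * X j + B j * X (j + 1)) =
      A j * d j * X j - A (j + 1) * d (j + 1) * X (j + 1) := fun j => by
    rw [hrec]; ring
  rw [sum_congr rfl fun j _ => htel j, sum_range_sub', h0, hrec, hn]
  ring

noncomputable def hypergeomCoeff (a b c : ℝ) (j : ℕ) : ℝ :=
  (∏ i ∈ range j, (a + i)) * (∏ i ∈ range j, (b + i)) /
    ((∏ i ∈ range j, (c + i)) * (j.factorial : ℝ))

theorem hypergeomCoeff_succ (a b c : ℝ) (j : ℕ) (hc : c + j ≠ 0) :
    (j + 1) * (c + j) * hypergeomCoeff a b c (j + 1) =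
      (a + j) * (b + j) * hypergeomCoeff a b c j := by
  by_cases hP : ∏ i ∈ range j, (c + i) = 0
  · -- both coefficients are junk zeros (`x / 0 = 0`)
    simp [hypergeomCoeff, prod_range_succ, hP]
  · simp only [hypergeomCoeff, prod_range_succ, Nat.factorial_succ]
    push_cast
    field_simp

theorem hyperF_eq_sum (n l : ℕ) (x : ℝ) :
    hyperF n l x = ∑ j ∈ range (n + 1),
      hypergeomCoeff (-((n : ℝ) + l + 1)) (-n) (l + 2) j * x ^ j := rfl

theorem zetaSol_eq_sum (n l : ℕ) :
    zetaSol n l = fun y => ∑ j ∈ range (n + 1),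
      (-1) ^ j * hypergeomCoeff (-((n : ℝ) + l + 1)) (-n) (l + 2) j *
        radialMonomial (2 * j + l) (-(n + l + 1)) y := by
  funext y
  rw [zetaSol, hyperF_eq_sum, mul_sum]
  refine sum_congr rfl fun j _ => ?_
  have hpow : y ^ (2 * (j : ℤ) + l) = (y ^ 2) ^ j * y ^ l := by
    rw [← pow_mul, ← pow_add, ← zpow_natCast]; push_cast; ring_nf
  have hinv : (y ^ 2 + 1) ^ (-((n : ℤ) + l + 1)) = ((y ^ 2 + 1) ^ (n + l + 1))⁻¹ := by
    rw [zpow_neg]; norm_cast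
  rw [radialMonomial, hpow, hinv, neg_pow]
  ring

theorem radialOp_zetaSol (n l : ℕ) {y : ℝ} (hy : y ≠ 0) :
    radialOp (4 * ((n : ℝ) + l + 1) * ((n : ℝ) + l + 2)) l (zetaSol n l) y = 0 := by
  have hM : 4 * ((n : ℝ) + l + 1) * ((n : ℝ) + l + 2) =
      4 * ((-(n + l + 1) : ℤ) : ℝ) * ((-(n + l + 1) : ℤ) - 1) := by
    push_cast; ring
  rw [hM, zetaSol_eq_sum, radialOp_sum _ _ _ _
    (fun j _ => (eventually_ne_nhds hy).mono fun _ hx =>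
      (hasDerivAt_radialMonomial _ _ hx).differentiableAt)
    (fun j _ => differentiableAt_deriv_radialMonomial _ _ hy)]
  simp only [radialOp_radialMonomial _ _ _ hy]
  refine (sum_congr rfl fun j _ => ?_).trans (sum_range_mul_add_eq_zero_of_rec n
    (A := fun j : ℕ => 4 * j * (j + l + 1 : ℝ))
    (B := fun j : ℕ => 4 * (j - n) * (j - n - l - 1 : ℝ))
    (d := fun j => (-1) ^ j * hypergeomCoeff (-((n : ℝ) + l + 1)) (-n) (l + 2) j)
    (X := fun j => radialMonomial (2 * j + l - 2) (-(n + l + 1) - 1) y)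
    (by simp) (fun j => ?_) (by ring))
  · push_cast
    ring_nf
  · have := hypergeomCoeff_succ (-((n : ℝ) + l + 1)) (-n) (l + 2) j (by positivity)
    push_cast
    linear_combination (-4 * (-1) ^ j) * this

/-- **The analytic meson spectrum.** With `M̃² = 4(n+ℓ+1)(n+ℓ+2)`, the function `ζ` above
solves the rescaled radial equation
`ζ'' + (3/y) ζ' + (M̃²/(1+y²)² − ℓ(ℓ+2)/y²) ζ = 0` for all `y > 0`. -/
theorem zetaSol_solves_radial_equation (n l : ℕ) (y : ℝ) (hy : 0 < y) :
    deriv (deriv (zetaSol n l)) y + 3 / y * deriv (zetaSol n l) y +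
      ((4 * ((n : ℝ) + (l : ℝ) + 1) * ((n : ℝ) + (l : ℝ) + 2)) / (1 + y ^ 2) ^ 2 -
          ((l : ℝ) * ((l : ℝ) + 2)) / y ^ 2) * zetaSol n l y = 0 :=
  radialOp_zetaSol n l hy.ne'
end
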